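/- arXiv:2601.06715 — 2 statements merged into one kernel-verified Lean document; each statement's English description precedes it below -/
import Mathlib

section
/- Suppose p_0 satisfies the polynomial tail assumption with parameters γ, C_2. Then there exists a constant C depending only on γ, d, C_2 such that for every x with ‖x‖ > 1: (i) for every t ∈ (0, 1], p_t(x) ≤ C (1 + ‖x‖²)^{−(1+γ+d)/2}; and (ii) for every t > 1, p_t(x) ≤ C (1 + t^{(1+γ)/2}) (1 + ‖x‖²)^{−(1+γ+d)/2}. -/
open MeasureTheory Real
open scoped BigOperators ENNReal

noncomputable section

/-- Euclidean space ℝ^d. -/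
abbrev Euc (d : ℕ) : Type := EuclideanSpace ℝ (Fin d)

/-- The centered Gaussian density `φ_t(x) = (2πt)^{-d/2} exp(−‖x‖²/(2t))` on ℝ^d. -/
def gaussianKernel (d : ℕ) (t : ℝ) (x : Euc d) : ℝ :=
  (2 * π * t) ^ (-(d : ℝ) / 2) * Real.exp (-‖x‖ ^ 2 / (2 * t))

/-- `p0` is a probability density on ℝ^d. -/
def IsProbDensity {d : ℕ} (p0 : Euc d → ℝ) : Prop :=
  Measurable p0 ∧ (∀ x, 0 ≤ p0 x) ∧ (∫ x, p0 x) = 1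

/-- The Gaussian-smoothed density `p_t = p_0 * φ_t`. -/
def pt (d : ℕ) (p0 : Euc d → ℝ) (t : ℝ) (x : Euc d) : ℝ :=
  ∫ y, p0 y * gaussianKernel d t (x - y)

/-- Gradient of `p_t`: `∇p_t(x) = ((∇φ_t) * p_0)(x) = ∫ ((y−x)/t) φ_t(x−y) p_0(y) dy`. -/
def ptGrad (d : ℕ) (p0 : Euc d → ℝ) (t : ℝ) (x : Euc d) : Euc d :=
  ∫ y, (t⁻¹ * (gaussianKernel d t (x - y) * p0 y)) • (y - x)

/-- Score `s_t(x) = ∇ log p_t(x) = ∇p_t(x)/p_t(x)`. -/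
def scoreFn (d : ℕ) (p0 : Euc d → ℝ) (t : ℝ) (x : Euc d) : Euc d :=
  (pt d p0 t x)⁻¹ • ptGrad d p0 t x

/-- Joint law of `n` i.i.d. samples drawn from the density `p0`. -/
def sampleMeasure (d n : ℕ) (p0 : Euc d → ℝ) : Measure (Fin n → Euc d) :=
  Measure.pi fun _ => (volume : Measure (Euc d)).withDensity fun x => ENNReal.ofReal (p0 x)

/-- Gaussian kernel density estimator `\hat p_t(x) = (1/n) Σ_i φ_t(x − X_i)`. -/
def kde (d n : ℕ) (t : ℝ) (X : Fin n → Euc d) (x : Euc d) : ℝ :=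
  (n : ℝ)⁻¹ * ∑ i, gaussianKernel d t (x - X i)

/-- Gradient of the Gaussian KDE: `∇\hat p_t(x) = (1/(nt)) Σ_i (X_i − x) φ_t(x − X_i)`. -/
def kdeGrad (d n : ℕ) (t : ℝ) (X : Fin n → Euc d) (x : Euc d) : Euc d :=
  ((n : ℝ) * t)⁻¹ • ∑ i, gaussianKernel d t (x - X i) • (X i - x)

/-- Threshold `ρ_n = log n / (n (2πt)^{d/2})`. -/
def rhoThresh (d n : ℕ) (t : ℝ) : ℝ :=
  Real.log n / ((n : ℝ) * (2 * π * t) ^ ((d : ℝ) / 2))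

/-- Thresholded score estimator `\hat s_t = (∇\hat p_t/\hat p_t) 1{\hat p_t ≥ ρ_n}`. -/
def hatScore (d n : ℕ) (t : ℝ) (X : Fin n → Euc d) (x : Euc d) : Euc d :=
  if rhoThresh d n t ≤ kde d n t X x then (kde d n t X x)⁻¹ • kdeGrad d n t X x else 0

/-- Total variation distance between densities: `TV(f,g) = (1/2)∫|f−g|`. -/
def tvDist (d : ℕ) (f g : Euc d → ℝ) : ℝ := (1 / 2) * ∫ x, |f x - g x|

/-- Fourier transform `F[f](ω) = ∫ f(x) e^{−i⟨ω,x⟩} dx`. -/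
def fourierTf (d : ℕ) (f : Euc d → ℝ) (ω : Euc d) : ℂ :=
  ∫ x, (f x : ℂ) * Complex.exp (-(Complex.I * ((inner ℝ ω x : ℝ) : ℂ)))

/-- Sobolev assumption with smoothness β and radius L:
`∫ ‖ω‖^{2β} |F[p_0](ω)|² dω ≤ (2π)^d L²`. -/
def SobolevClass (d : ℕ) (β L : ℝ) (p0 : Euc d → ℝ) : Prop :=
  (∫ ω : Euc d, ‖ω‖ ^ (2 * β) * ‖fourierTf d p0 ω‖ ^ 2) ≤ (2 * π) ^ d * L ^ 2

/-- Polynomial tail assumption: `p_0(x) ≤ C₂ (1 + ‖x‖²)^{-(1+γ+d)/2}`. -/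
def PolyTail (d : ℕ) (γ C2 : ℝ) (p0 : Euc d → ℝ) : Prop :=
  ∀ x : Euc d, p0 x ≤ C2 * (1 + ‖x‖ ^ 2) ^ (-(1 + γ + (d : ℝ)) / 2)

/-- Exponential tail assumption: `p_0(x) ≤ C₁ exp(−c₁‖x‖^γ)`. -/
def ExpTail (d : ℕ) (γ c1 C1 : ℝ) (p0 : Euc d → ℝ) : Prop :=
  ∀ x : Euc d, p0 x ≤ C1 * Real.exp (-(c1 * ‖x‖ ^ γ))

/-- General kernel density estimator `\hat f_h(y) = (1/(n h^d)) Σ_i K((y − X_i)/h)`. -/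
def kdeK (d n : ℕ) (K : Euc d → ℝ) (h : ℝ) (X : Fin n → Euc d) (y : Euc d) : ℝ :=
  ((n : ℝ) * h ^ d)⁻¹ * ∑ i, K (h⁻¹ • (y - X i))

/-- Smoothed kernel estimator `\hat p_t = \hat f_h * φ_t`. -/
def hatptK (d n : ℕ) (K : Euc d → ℝ) (h t : ℝ) (X : Fin n → Euc d) (x : Euc d) : ℝ :=
  ∫ y, kdeK d n K h X y * gaussianKernel d t (x - y)

/-- Local sup of `p_t`: `p_t^*(x) = sup{ p_t(y) : ‖y − x‖_∞ ≤ h }`. -/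
def ptStar (d : ℕ) (p0 : Euc d → ℝ) (t h : ℝ) (x : Euc d) : ℝ :=
  sSup ((fun y => pt d p0 t y) '' {y : Euc d | ∀ i, |y i - x i| ≤ h})

/-!
Split the convolution `p_t(x) = ∫ p₀(y) φ_t(x - y) dy` at `‖y‖ = ‖x‖ / 2`. Where `‖y‖ ≥ ‖x‖ / 2` the
tail assumption gives `p₀(y) ≲ (1 + ‖x‖²)^{-a}` with `a = (1 + γ + d) / 2`, and `∫ φ_t = 1`. Where
`‖y‖ < ‖x‖ / 2` we have `‖x - y‖² ≥ (1 + ‖x‖²) / 8`, so `φ_t(x - y) ≤ t^{-d/2} e^{-w/(16t)}` with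
`w = 1 + ‖x‖²`, and `∫ p₀ = 1`. Finally `e^{-u} ≤ s^s u^{-s}` turns the Gaussian factor into
`t^{s - d/2} w^{-s}`: take `s = a + d/2` when `t ≤ 1` and `s = a` when `t > 1`, which leaves the
factor `t^{(1+γ)/2}`.
-/

section

variable {d : ℕ} {t : ℝ}

lemma gaussianKernel_nonneg (ht : 0 < t) (z : Euc d) : 0 ≤ gaussianKernel d t z := by
  unfold gaussianKernel
  positivity

lemma integral_gaussianKernel (ht : 0 < t) : ∫ z : Euc d, gaussianKernel d t z = 1 := by
  have hb : (0 : ℝ) < (2 * t)⁻¹ := by positivity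
  have hform : ∀ z : Euc d, gaussianKernel d t z
      = (2 * π * t) ^ (-(d : ℝ) / 2) * Real.exp (-(2 * t)⁻¹ * ‖z‖ ^ 2) := by
    intro z
    unfold gaussianKernel
    congr 2
    ring
  have hpi : π / (2 * t)⁻¹ = 2 * π * t := by field_simp
  simp_rw [hform]
  rw [integral_const_mul, GaussianFourier.integral_rexp_neg_mul_sq_norm hb, finrank_euclideanSpace,
    Fintype.card_fin, hpi, ← Real.rpow_add (by positivity), neg_div, neg_add_cancel,
    Real.rpow_zero]

lemma integrable_gaussianKernel (ht : 0 < t) : Integrable (gaussianKernel d t) :=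
  Integrable.of_integral_ne_zero (by rw [integral_gaussianKernel ht]; exact one_ne_zero)

lemma gaussianKernel_le (ht : 0 < t) (z : Euc d) :
    gaussianKernel d t z ≤ t ^ (-((d : ℝ) / 2)) * Real.exp (-‖z‖ ^ 2 / (2 * t)) := by
  have h2pi : 1 ≤ 2 * π := by linarith [pi_gt_three]
  have hconst : (2 * π) ^ (-(d : ℝ) / 2) ≤ 1 :=
    Real.rpow_le_one_of_one_le_of_nonpos h2pi (by rw [neg_div]; simp; positivity)
  rw [gaussianKernel, Real.mul_rpow (by positivity) ht.le, ← neg_div]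
  gcongr
  exact mul_le_of_le_one_left (by positivity) hconst

lemma gaussianKernel_le_of_half_norm_lt (ht : 0 < t) {x y : Euc d} (hx : 1 ≤ ‖x‖)
    (hy : ‖y‖ < ‖x‖ / 2) :
    gaussianKernel d t (x - y) ≤ t ^ (-((d : ℝ) / 2)) * Real.exp (-((1 + ‖x‖ ^ 2) / 16 / t)) := by
  have hxy : ‖x‖ / 2 < ‖x - y‖ := by linarith [norm_sub_norm_le x y]
  have hsq : (1 + ‖x‖ ^ 2) / 8 ≤ ‖x - y‖ ^ 2 := by
    nlinarith [pow_le_pow_left₀ (by positivity) hxy.le 2]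
  refine (gaussianKernel_le ht _).trans ?_
  gcongr
  rw [neg_div, neg_le_neg_iff, div_div, div_le_div_iff₀ (by positivity) (by positivity)]
  nlinarith

lemma IsProbDensity.integrable {p0 : Euc d → ℝ} (hp : IsProbDensity p0) : Integrable p0 :=
  Integrable.of_integral_ne_zero (by rw [hp.2.2]; exact one_ne_zero)

lemma div_rpow_neg_eq {A B s : ℝ} (hA : 0 < A) (hB : 0 < B) :
    (A / B) ^ (-s) = B ^ s * A ^ (-s) := by
  rw [Real.div_rpow hA.le hB.le, Real.rpow_neg hB.le, div_inv_eq_mul, mul_comm]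

lemma one_add_sq_rpow_neg_le {a r ρ : ℝ} (ha : 0 ≤ a) (hr : 0 ≤ r) (h : r / 2 ≤ ρ) :
    (1 + ρ ^ 2) ^ (-a) ≤ 4 ^ a * (1 + r ^ 2) ^ (-a) := by
  have hsq : (1 + r ^ 2) / 4 ≤ 1 + ρ ^ 2 := by nlinarith [pow_le_pow_left₀ (by positivity) h 2]
  calc (1 + ρ ^ 2) ^ (-a) ≤ ((1 + r ^ 2) / 4) ^ (-a) :=
        Real.rpow_le_rpow_of_nonpos (by positivity) hsq (neg_nonpos.mpr ha)
    _ = 4 ^ a * (1 + r ^ 2) ^ (-a) := div_rpow_neg_eq (by positivity) (by norm_num)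

lemma pt_le_of_tail_bound {p0 : Euc d → ℝ} {a C2 : ℝ} (hp : IsProbDensity p0) (ha : 0 ≤ a)
    (hC2 : 0 ≤ C2) (htail : ∀ y, p0 y ≤ C2 * (1 + ‖y‖ ^ 2) ^ (-a)) (ht : 0 < t) {x : Euc d}
    (hx : 1 ≤ ‖x‖) :
    pt d p0 t x ≤ C2 * 4 ^ a * (1 + ‖x‖ ^ 2) ^ (-a)
      + t ^ (-((d : ℝ) / 2)) * Real.exp (-((1 + ‖x‖ ^ 2) / 16 / t)) := by
  set c := C2 * 4 ^ a * (1 + ‖x‖ ^ 2) ^ (-a)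
  set M := t ^ (-((d : ℝ) / 2)) * Real.exp (-((1 + ‖x‖ ^ 2) / 16 / t))
  have hp0 : ∀ y, 0 ≤ p0 y := hp.2.1
  have hφ : ∀ y, 0 ≤ gaussianKernel d t (x - y) := fun y => gaussianKernel_nonneg ht _
  have hpoint : ∀ y,
      p0 y * gaussianKernel d t (x - y) ≤ M * p0 y + c * gaussianKernel d t (x - y) := by
    intro y
    rcases le_or_gt (‖x‖ / 2) ‖y‖ with hfar | hnear
    · have hsmall : p0 y ≤ c := by
        calc p0 y ≤ C2 * (1 + ‖y‖ ^ 2) ^ (-a) := htail y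
          _ ≤ C2 * (4 ^ a * (1 + ‖x‖ ^ 2) ^ (-a)) :=
            mul_le_mul_of_nonneg_left (one_add_sq_rpow_neg_le ha (norm_nonneg x) hfar) hC2
          _ = c := (mul_assoc _ _ _).symm
      nlinarith [hφ y, hp0 y, show 0 ≤ M by positivity]
    · have hsmall := gaussianKernel_le_of_half_norm_lt ht hx hnear
      nlinarith [hφ y, hp0 y, show 0 ≤ c by positivity]
  have hφint : Integrable fun y => gaussianKernel d t (x - y) :=
    (integrable_gaussianKernel ht).comp_sub_left x
  have hbound : Integrable fun y => M * p0 y + c * gaussianKernel d t (x - y) :=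
    (hp.integrable.const_mul M).add (hφint.const_mul c)
  calc pt d p0 t x ≤ ∫ y, (M * p0 y + c * gaussianKernel d t (x - y)) :=
        integral_mono_of_nonneg (.of_forall fun y => mul_nonneg (hp0 y) (hφ y)) hbound
          (.of_forall hpoint)
    _ = c + M := by
      rw [integral_add (hp.integrable.const_mul M) (hφint.const_mul c), integral_const_mul,
        integral_const_mul, hp.2.2, integral_sub_left_eq_self (gaussianKernel d t) volume x,
        integral_gaussianKernel ht]
      ring

/-- `exp u = (exp (u / s)) ^ s ≥ (u / s) ^ s`. -/
lemma exp_neg_le_rpow_mul_rpow_neg {s u : ℝ} (hs : 0 < s) (hu : 0 < u) :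
    Real.exp (-u) ≤ s ^ s * u ^ (-s) := by
  have hpow : (u / s) ^ s ≤ Real.exp u := by
    calc (u / s) ^ s ≤ Real.exp (u / s) ^ s := by
          gcongr; linarith [Real.add_one_le_exp (u / s)]
      _ = Real.exp u := by rw [← Real.exp_mul, div_mul_cancel₀ u hs.ne']
  calc Real.exp (-u) = (Real.exp u)⁻¹ := Real.exp_neg u
    _ ≤ ((u / s) ^ s)⁻¹ := inv_anti₀ (by positivity) hpow
    _ = s ^ s * u ^ (-s) := by
      rw [Real.div_rpow hu.le hs.le, Real.rpow_neg hu.le, inv_div, div_eq_mul_inv]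

lemma rpow_neg_mul_exp_neg_div_le {e s w : ℝ} (hs : 0 < s) (ht : 0 < t) (hw : 0 < w) :
    t ^ (-e) * Real.exp (-(w / 16 / t)) ≤ (16 * s) ^ s * t ^ (s - e) * w ^ (-s) := by
  have hexp := exp_neg_le_rpow_mul_rpow_neg hs (by positivity : 0 < w / 16 / t)
  rw [div_div, div_rpow_neg_eq hw (by positivity), Real.mul_rpow (by norm_num) ht.le] at hexp
  calc t ^ (-e) * Real.exp (-(w / 16 / t))
      ≤ t ^ (-e) * (s ^ s * (16 ^ s * t ^ s * w ^ (-s))) := by rw [div_div]; gcongr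
    _ = (16 * s) ^ s * (t ^ (-e) * t ^ s) * w ^ (-s) := by
      rw [Real.mul_rpow (by norm_num) hs.le]; ring
    _ = (16 * s) ^ s * t ^ (s - e) * w ^ (-s) := by
      rw [← Real.rpow_add ht, neg_add_eq_sub]

lemma rpow_neg_mul_exp_neg_div_le_of_le_one {a e w : ℝ} (ha : 0 < a) (he : 0 ≤ e) (ht : 0 < t)
    (ht1 : t ≤ 1) (hw : 1 ≤ w) :
    t ^ (-e) * Real.exp (-(w / 16 / t)) ≤ (16 * (a + e)) ^ (a + e) * w ^ (-a) := by
  have hbound := rpow_neg_mul_exp_neg_div_le (e := e) (by positivity : 0 < a + e) ht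
    (by positivity : 0 < w)
  rw [add_sub_cancel_right] at hbound
  have hta : t ^ a ≤ 1 := Real.rpow_le_one ht.le ht1 ha.le
  have hwa : w ^ (-(a + e)) ≤ w ^ (-a) := Real.rpow_le_rpow_of_exponent_le hw (by linarith)
  calc t ^ (-e) * Real.exp (-(w / 16 / t)) ≤ (16 * (a + e)) ^ (a + e) * t ^ a * w ^ (-(a + e)) :=
        hbound
    _ ≤ (16 * (a + e)) ^ (a + e) * 1 * w ^ (-a) := by gcongr
    _ = (16 * (a + e)) ^ (a + e) * w ^ (-a) := by rw [mul_one]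

end

theorem stmt3_general (d : ℕ) (γ C2 : ℝ) (hγ : 0 < γ) (hC2 : 0 < C2) :
    ∃ C > 0, ∀ p0 : Euc d → ℝ, IsProbDensity p0 → PolyTail d γ C2 p0 →
      ∀ x : Euc d, 1 < ‖x‖ →
        (∀ t : ℝ, 0 < t → t ≤ 1 →
          pt d p0 t x ≤ C * (1 + ‖x‖ ^ 2) ^ (-(1 + γ + (d : ℝ)) / 2)) ∧
        (∀ t : ℝ, 1 < t →
          pt d p0 t x ≤ C * (1 + t ^ ((1 + γ) / 2)) *
            (1 + ‖x‖ ^ 2) ^ (-(1 + γ + (d : ℝ)) / 2)) := by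
  set a : ℝ := (1 + γ + d) / 2
  have ha : 0 < a := by positivity
  set A := C2 * 4 ^ a
  set K₁ := (16 * (a + d / 2)) ^ (a + d / 2)
  set K₂ := (16 * a) ^ a
  refine ⟨A + K₁ + K₂, by positivity, fun p0 hp htail x hx => ?_⟩
  have hexp : -(1 + γ + (d : ℝ)) / 2 = -a := neg_div _ _
  rw [PolyTail, hexp] at htail
  rw [hexp]
  set X := (1 + ‖x‖ ^ 2) ^ (-a)
  have hw : 1 ≤ 1 + ‖x‖ ^ 2 := le_add_of_nonneg_right (by positivity)
  have hsplit := fun t (ht : 0 < t) => pt_le_of_tail_bound hp ha.le hC2.le htail ht hx.le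
  have hK₁X : 0 ≤ K₁ * X := by positivity
  have hK₂X : 0 ≤ K₂ * X := by positivity
  refine ⟨fun t ht ht1 => ?_, fun t ht1 => ?_⟩
  · have hheat := rpow_neg_mul_exp_neg_div_le_of_le_one (e := d / 2) ha (by positivity) ht ht1 hw
    linarith [hsplit t ht, show (A + K₁ + K₂) * X = A * X + K₁ * X + K₂ * X by ring]
  · have ht : 0 < t := by linarith
    have hheat := rpow_neg_mul_exp_neg_div_le (e := d / 2) ha ht (by positivity : 0 < 1 + ‖x‖ ^ 2)
    rw [show a - d / 2 = (1 + γ) / 2 by ring] at hheat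
    set T := t ^ ((1 + γ) / 2)
    have hATX : 0 ≤ (A + K₁) * T * X := by positivity
    linarith [hsplit t ht, show (A + K₁ + K₂) * (1 + T) * X
      = A * X + K₁ * X + K₂ * X + (A + K₁) * T * X + K₂ * T * X by ring]

/-- If `p_0` has polynomial tails, so does `p_t`, uniformly over the stated time ranges. -/
theorem stmt3 (d : ℕ) (hd : 1 ≤ d) (γ C2 : ℝ) (hγ : 0 < γ) (hC2 : 0 < C2) :
    ∃ C > 0, ∀ p0 : Euc d → ℝ, IsProbDensity p0 → PolyTail d γ C2 p0 →
      ∀ x : Euc d, 1 < ‖x‖ →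
        (∀ t : ℝ, 0 < t → t ≤ 1 →
          pt d p0 t x ≤ C * (1 + ‖x‖ ^ 2) ^ (-(1 + γ + (d : ℝ)) / 2)) ∧
        (∀ t : ℝ, 1 < t →
          pt d p0 t x ≤ C * (1 + t ^ ((1 + γ) / 2)) *
            (1 + ‖x‖ ^ 2) ^ (-(1 + γ + (d : ℝ)) / 2)) :=
  stmt3_general d γ C2 hγ hC2
end
end

section
/- Let p_0 be a probability density on ℝ^d with finite first moment M_1 := ∫ ‖z‖ p_0(z) dz < ∞. Then for every T > 0, the Gaussian-smoothed density p_T = p_0 * φ_T satisfies TV(p_T, φ_T) ≤ M_1 / (2√T). -/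
open MeasureTheory Real
open scoped BigOperators ENNReal

noncomputable section

/-!
Since `∫ p₀ = 1`, `p_T - φ_T = ∫ p₀(y) (φ_T(· - y) - φ_T) dy`, so it suffices to bound the
L¹ distance between `φ_T` and its translate by `y` by `‖y‖ / √T`. The fundamental theorem of
calculus along the segment `[x - y, x]` and translation invariance of Lebesgue measure bound it by
`‖∂_y φ_T‖₁ = E |⟪X, y⟫| / T` for `X ~ N(0, T I)`, and Cauchy–Schwarz together with
`E ⟪X, y⟫² = T ‖y‖²` (integration by parts) gives `E |⟪X, y⟫| ≤ √T ‖y‖`.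
-/

open GaussianFourier
open scoped RealInnerProductSpace

section Translation

variable {E F : Type*} [NormedAddCommGroup E] [NormedSpace ℝ E] [NormedAddCommGroup F]
  [NormedSpace ℝ F] [CompleteSpace F] {f : E → F}

theorem enorm_sub_comp_sub_le_lintegral_fderiv (hf : ContDiff ℝ 1 f) (x y : E) :
    ‖f (x - y) - f x‖ₑ ≤ ∫⁻ s in Set.Ioc (0 : ℝ) 1, ‖fderiv ℝ f (x - s • y) y‖ₑ := by
  have hderiv : ∀ s : ℝ, HasDerivAt (fun s : ℝ => f (x - s • y))
      (fderiv ℝ f (x - s • y) (-y)) s := fun s => by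
    simpa [Function.comp_def] using
      ((hf.differentiable one_ne_zero) (x - s • y)).hasFDerivAt.comp_hasDerivAt s
        (((hasDerivAt_id s).smul_const y).const_sub x)
  have hcont : Continuous fun s : ℝ => fderiv ℝ f (x - s • y) (-y) := by
    have := hf.continuous_fderiv one_ne_zero
    fun_prop
  have hFTC := intervalIntegral.integral_eq_sub_of_hasDerivAt (fun s _ => hderiv s)
    (hcont.intervalIntegrable 0 1)
  simp only [one_smul, zero_smul, sub_zero] at hFTC
  rw [← hFTC, intervalIntegral.integral_of_le zero_le_one]
  refine (enorm_integral_le_lintegral_enorm _).trans_eq ?_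
  simp

theorem lintegral_enorm_sub_comp_sub_le_lintegral_fderiv [MeasurableSpace E] [BorelSpace E]
    [SecondCountableTopology E] (μ : Measure E) [SFinite μ] [μ.IsAddRightInvariant]
    (hf : ContDiff ℝ 1 f) (y : E) :
    ∫⁻ x, ‖f (x - y) - f x‖ₑ ∂μ ≤ ∫⁻ x, ‖fderiv ℝ f x y‖ₑ ∂μ := by
  have hmeas : Measurable fun p : E × ℝ => ‖fderiv ℝ f (p.1 - p.2 • y) y‖ₑ := by
    have := hf.continuous_fderiv one_ne_zero
    exact (by fun_prop : Continuous fun p : E × ℝ => fderiv ℝ f (p.1 - p.2 • y) y).enorm.measurable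
  calc ∫⁻ x, ‖f (x - y) - f x‖ₑ ∂μ
      ≤ ∫⁻ x, (∫⁻ s in Set.Ioc (0 : ℝ) 1, ‖fderiv ℝ f (x - s • y) y‖ₑ) ∂μ :=
        lintegral_mono fun x => enorm_sub_comp_sub_le_lintegral_fderiv hf x y
    _ = ∫⁻ s in Set.Ioc (0 : ℝ) 1, (∫⁻ x, ‖fderiv ℝ f (x - s • y) y‖ₑ ∂μ) :=
        lintegral_lintegral_swap hmeas.aemeasurable
    _ = ∫⁻ x, ‖fderiv ℝ f x y‖ₑ ∂μ := by
        simp_rw [lintegral_sub_right_eq_self (fun x => ‖fderiv ℝ f x y‖ₑ)]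
        simp

end Translation

theorem integrable_exp_neg_mul_sq_norm {V : Type*} [NormedAddCommGroup V] [InnerProductSpace ℝ V]
    [FiniteDimensional ℝ V] [MeasurableSpace V] [BorelSpace V] {b : ℝ} (hb : 0 < b) :
    Integrable fun v : V => Real.exp (-b * ‖v‖ ^ 2) :=
  .of_integral_ne_zero (by rw [integral_rexp_neg_mul_sq_norm hb]; positivity)

theorem mul_exp_neg_two_mul_le (u : ℝ) : u * Real.exp (-(2 * u)) ≤ Real.exp (-u) :=
  calc u * Real.exp (-(2 * u)) ≤ Real.exp u * Real.exp (-(2 * u)) := by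
        gcongr; linarith [Real.add_one_le_exp u]
    _ = Real.exp (-u) := by rw [← Real.exp_add]; ring_nf

section Gaussian

variable {d : ℕ} {T : ℝ}

theorem gaussianKernel_eq : gaussianKernel d T =
    fun x => (2 * π * T) ^ (-(d : ℝ) / 2) * Real.exp (-(2 * T)⁻¹ * ‖x‖ ^ 2) := by
  ext x
  rw [gaussianKernel]
  congr 2
  ring

theorem gaussianKernel_pos (hT : 0 < T) (x : Euc d) : 0 < gaussianKernel d T x := by
  unfold gaussianKernel; positivity

theorem contDiff_gaussianKernel {n : WithTop ℕ∞} : ContDiff ℝ n (gaussianKernel d T) := by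
  rw [gaussianKernel_eq]
  have := contDiff_norm_sq ℝ (E := Euc d) (n := n)
  fun_prop

@[fun_prop]
theorem continuous_gaussianKernel : Continuous (gaussianKernel d T) :=
  contDiff_gaussianKernel.continuous (n := 0)

theorem integrable_gaussianKernel_s4 (hT : 0 < T) : Integrable (gaussianKernel d T) := by
  rw [gaussianKernel_eq]
  exact (integrable_exp_neg_mul_sq_norm (by positivity)).const_mul _

theorem integral_gaussianKernel_s4 (hT : 0 < T) : ∫ x, gaussianKernel d T x = 1 := by
  rw [gaussianKernel_eq, integral_const_mul, integral_rexp_neg_mul_sq_norm (by positivity),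
    finrank_euclideanSpace_fin, div_inv_eq_mul, show π * (2 * T) = 2 * π * T by ring,
    ← Real.rpow_add (by positivity), neg_div, neg_add_cancel, Real.rpow_zero]

theorem fderiv_gaussianKernel_apply (hT : 0 < T) (x v : Euc d) :
    fderiv ℝ (gaussianKernel d T) x v = -(⟪x, v⟫ / T) * gaussianKernel d T x := by
  have h := (((hasStrictFDerivAt_norm_sq x).hasFDerivAt.const_mul (-(2 * T)⁻¹)).exp).const_mul
    ((2 * π * T) ^ (-(d : ℝ) / 2))
  rw [← gaussianKernel_eq] at h
  rw [h.fderiv, gaussianKernel_eq]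
  simp only [smul_apply, innerSL_apply_apply, smul_eq_mul, nsmul_eq_mul, Nat.cast_ofNat]
  field_simp

theorem norm_gaussianKernel_le (hT : 0 < T) (x : Euc d) :
    ‖gaussianKernel d T x‖ ≤ (2 * π * T) ^ (-(d : ℝ) / 2) := by
  rw [Real.norm_of_nonneg (gaussianKernel_pos hT x).le, gaussianKernel]
  refine mul_le_of_le_one_right (by positivity) (Real.exp_le_one_iff.2 ?_)
  exact div_nonpos_of_nonpos_of_nonneg (by simp) (by positivity)

theorem sq_norm_mul_gaussianKernel_le (hT : 0 < T) (x : Euc d) :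
    ‖x‖ ^ 2 * gaussianKernel d T x ≤
      4 * T * (2 * π * T) ^ (-(d : ℝ) / 2) * Real.exp (-(4 * T)⁻¹ * ‖x‖ ^ 2) := by
  have hu := mul_exp_neg_two_mul_le ((4 * T)⁻¹ * ‖x‖ ^ 2)
  have hC : 0 < (2 * π * T) ^ (-(d : ℝ) / 2) := by positivity
  rw [gaussianKernel_eq]
  calc ‖x‖ ^ 2 * ((2 * π * T) ^ (-(d : ℝ) / 2) * Real.exp (-(2 * T)⁻¹ * ‖x‖ ^ 2))
      = 4 * T * (2 * π * T) ^ (-(d : ℝ) / 2) *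
          ((4 * T)⁻¹ * ‖x‖ ^ 2 * Real.exp (-(2 * ((4 * T)⁻¹ * ‖x‖ ^ 2)))) := by
        field_simp
        ring_nf
    _ ≤ _ := by gcongr; simpa [neg_mul] using hu

theorem integrable_sq_inner_mul_gaussianKernel (hT : 0 < T) (y : Euc d) :
    Integrable fun x => ⟪x, y⟫ ^ 2 * gaussianKernel d T x := by
  refine Integrable.mono' (((integrable_exp_neg_mul_sq_norm (V := Euc d)
    (inv_pos.2 (by positivity : 0 < 4 * T))).const_mul
    (‖y‖ ^ 2 * (4 * T * (2 * π * T) ^ (-(d : ℝ) / 2))))) (by fun_prop) ?_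
  refine Filter.Eventually.of_forall fun x => ?_
  have hφ := gaussianKernel_pos hT x
  have hinner : ⟪x, y⟫ ^ 2 ≤ ‖x‖ ^ 2 * ‖y‖ ^ 2 := by
    rw [← mul_pow, ← sq_abs]
    exact pow_le_pow_left₀ (abs_nonneg _) (abs_real_inner_le_norm x y) 2
  rw [Real.norm_of_nonneg (by positivity)]
  calc ⟪x, y⟫ ^ 2 * gaussianKernel d T x ≤ ‖y‖ ^ 2 * (‖x‖ ^ 2 * gaussianKernel d T x) := by
        nlinarith
    _ ≤ _ := by
        rw [mul_assoc]
        exact mul_le_mul_of_nonneg_left (sq_norm_mul_gaussianKernel_le hT x) (by positivity)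

theorem integrable_abs_inner_mul_gaussianKernel (hT : 0 < T) (y : Euc d) :
    Integrable fun x => |⟪x, y⟫| * gaussianKernel d T x := by
  refine Integrable.mono' (((integrable_sq_inner_mul_gaussianKernel hT y).add
    (integrable_gaussianKernel_s4 hT)).div_const 2) (by fun_prop) (Filter.Eventually.of_forall ?_)
  intro x
  have hφ := gaussianKernel_pos hT x
  rw [Real.norm_of_nonneg (by positivity), Pi.add_apply]
  nlinarith [sq_abs ⟪x, y⟫, mul_nonneg (sq_nonneg (|⟪x, y⟫| - 1)) hφ.le]

theorem integral_sq_inner_mul_gaussianKernel (hT : 0 < T) (y : Euc d) :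
    ∫ x, ⟪x, y⟫ ^ 2 * gaussianKernel d T x = T * ‖y‖ ^ 2 := by
  have hf' : (fun x => fderiv ℝ (fun x => ⟪x, y⟫) x y * gaussianKernel d T x) =
      fun x => ‖y‖ ^ 2 * gaussianKernel d T x := by
    ext x
    rw [fderiv_inner_apply ℝ (f := fun x => x) differentiableAt_fun_id (differentiableAt_const y)]
    simp
  have hg' : (fun x => ⟪x, y⟫ * fderiv ℝ (gaussianKernel d T) x y) =
      fun x => -T⁻¹ * (⟪x, y⟫ ^ 2 * gaussianKernel d T x) := by
    ext x
    rw [fderiv_gaussianKernel_apply hT]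
    ring
  have hfg : Integrable fun x => ⟪x, y⟫ * gaussianKernel d T x :=
    (integrable_abs_inner_mul_gaussianKernel hT y).mono' (by fun_prop)
      (Filter.Eventually.of_forall fun x => by
        rw [norm_mul, Real.norm_eq_abs, Real.norm_of_nonneg (gaussianKernel_pos hT x).le])
  have hdiff : Differentiable ℝ (gaussianKernel d T) :=
    contDiff_gaussianKernel.differentiable one_ne_zero
  have hibp := integral_mul_fderiv_eq_neg_fderiv_mul_of_integrable (μ := volume)
    (by rw [hf']; exact (integrable_gaussianKernel_s4 hT).const_mul _)
    (by rw [hg']; exact (integrable_sq_inner_mul_gaussianKernel hT y).const_mul _) hfg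
    (fun x _ => (innerSL ℝ y).differentiableAt.congr_of_eventuallyEq ?_)
    (fun x _ => hdiff x)
  · rw [hf', hg', integral_const_mul, integral_const_mul, integral_gaussianKernel_s4 hT] at hibp
    field_simp at hibp
    linarith
  · exact Filter.Eventually.of_forall fun x => real_inner_comm _ _

theorem integral_abs_inner_mul_gaussianKernel_le (hT : 0 < T) (y : Euc d) :
    ∫ x, |⟪x, y⟫| * gaussianKernel d T x ≤ √T * ‖y‖ := by
  rcases eq_or_ne y 0 with rfl | hy
  · simp
  set a := √T * ‖y‖
  have ha : 0 < a := by positivity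
  have hsq : T * ‖y‖ ^ 2 = a ^ 2 := by rw [mul_pow, Real.sq_sqrt hT.le]
  -- AM-GM with `a ^ 2 = ∫ ⟪x, y⟫ ^ 2 φ_T`: this is Cauchy–Schwarz against the weight `φ_T`.
  have hpointwise (x : Euc d) : 2 * a * (|⟪x, y⟫| * gaussianKernel d T x) ≤
      ⟪x, y⟫ ^ 2 * gaussianKernel d T x + a ^ 2 * gaussianKernel d T x := by
    linear_combination mul_nonneg (sq_nonneg (|⟪x, y⟫| - a)) (gaussianKernel_pos hT x).le +
      gaussianKernel d T x * sq_abs ⟪x, y⟫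
  have hint := integral_mono ((integrable_abs_inner_mul_gaussianKernel hT y).const_mul (2 * a))
    ((integrable_sq_inner_mul_gaussianKernel hT y).add
      ((integrable_gaussianKernel_s4 hT).const_mul (a ^ 2))) hpointwise
  simp only [Pi.add_apply] at hint
  rw [integral_const_mul, integral_add (integrable_sq_inner_mul_gaussianKernel hT y)
    ((integrable_gaussianKernel_s4 hT).const_mul _), integral_const_mul,
    integral_sq_inner_mul_gaussianKernel hT, integral_gaussianKernel_s4 hT, hsq] at hint
  nlinarith

theorem lintegral_enorm_gaussianKernel_sub_le (hT : 0 < T) (y : Euc d) :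
    ∫⁻ x, ‖gaussianKernel d T (x - y) - gaussianKernel d T x‖ₑ ≤ ENNReal.ofReal (‖y‖ / √T) :=
  calc ∫⁻ x, ‖gaussianKernel d T (x - y) - gaussianKernel d T x‖ₑ
      ≤ ∫⁻ x, ‖fderiv ℝ (gaussianKernel d T) x y‖ₑ :=
        lintegral_enorm_sub_comp_sub_le_lintegral_fderiv volume contDiff_gaussianKernel y
    _ = ∫⁻ x, ENNReal.ofReal (|⟪x, y⟫| * gaussianKernel d T x / T) := by
        refine lintegral_congr fun x => ?_
        rw [fderiv_gaussianKernel_apply hT, Real.enorm_eq_ofReal_abs, abs_mul, abs_neg, abs_div,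
          abs_of_pos hT, abs_of_pos (gaussianKernel_pos hT x)]
        ring_nf
    _ = ENNReal.ofReal ((∫ x, |⟪x, y⟫| * gaussianKernel d T x) / T) := by
        rw [← integral_div, ofReal_integral_eq_lintegral_ofReal
          ((integrable_abs_inner_mul_gaussianKernel hT y).div_const T)
          (Filter.Eventually.of_forall fun x => by positivity [gaussianKernel_pos hT x])]
    _ ≤ ENNReal.ofReal (‖y‖ / √T) := by
        refine ENNReal.ofReal_le_ofReal ?_
        calc (∫ x, |⟪x, y⟫| * gaussianKernel d T x) / T ≤ √T * ‖y‖ / T := by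
              gcongr; exact integral_abs_inner_mul_gaussianKernel_le hT y
          _ = ‖y‖ / √T := by
              field_simp
              rw [Real.sq_sqrt hT.le, mul_comm]

end Gaussian

theorem lintegral_enorm_integral_mul_comp_sub_sub_le {E : Type*} [NormedAddCommGroup E]
    [MeasurableSpace E] [BorelSpace E] [SecondCountableTopology E] {μ : Measure E} [SFinite μ]
    {p K : E → ℝ} {C : ℝ} (hp : Measurable p) (hp_one : ∫ y, p y ∂μ = 1) (hK : Measurable K)
    (hK_le : ∀ x, ‖K x‖ ≤ C) :
    ∫⁻ x, ‖(∫ y, p y * K (x - y) ∂μ) - K x‖ₑ ∂μ ≤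
      ∫⁻ y, ‖p y‖ₑ * ∫⁻ x, ‖K (x - y) - K x‖ₑ ∂μ ∂μ := by
  have hp_int : Integrable p μ := Integrable.of_integral_ne_zero (by simp [hp_one])
  have hmix (x : E) : (∫ y, p y * K (x - y) ∂μ) - K x = ∫ y, p y * (K (x - y) - K x) ∂μ := by
    have hconv : Integrable (fun y => p y * K (x - y)) μ :=
      hp_int.mul_bdd (by fun_prop : Measurable fun y => K (x - y)).aestronglyMeasurable
        (Filter.Eventually.of_forall fun y => hK_le _)
    simp_rw [mul_sub]
    rw [integral_sub hconv (hp_int.mul_const _), integral_mul_const, hp_one, one_mul]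
  calc ∫⁻ x, ‖(∫ y, p y * K (x - y) ∂μ) - K x‖ₑ ∂μ
      ≤ ∫⁻ x, ∫⁻ y, ‖p y‖ₑ * ‖K (x - y) - K x‖ₑ ∂μ ∂μ := by
        refine lintegral_mono fun x => ?_
        simpa only [hmix, enorm_mul] using enorm_integral_le_lintegral_enorm
          (fun y => p y * (K (x - y) - K x))
    _ = ∫⁻ y, ∫⁻ x, ‖p y‖ₑ * ‖K (x - y) - K x‖ₑ ∂μ ∂μ :=
        lintegral_lintegral_swap (by fun_prop)
    _ = ∫⁻ y, ‖p y‖ₑ * ∫⁻ x, ‖K (x - y) - K x‖ₑ ∂μ ∂μ := by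
        refine lintegral_congr fun y => lintegral_const_mul _ ?_
        fun_prop

theorem integral_abs_le_toReal_lintegral_enorm {α : Type*} [MeasurableSpace α] {μ : Measure α}
    (f : α → ℝ) : ∫ x, |f x| ∂μ ≤ (∫⁻ x, ‖f x‖ₑ ∂μ).toReal := by
  simpa [Real.enorm_eq_ofReal_abs] using
    (le_abs_self _).trans (norm_integral_le_lintegral_norm fun x => |f x|)

theorem lintegral_enorm_pt_sub_gaussianKernel_le {d : ℕ} {p0 : Euc d → ℝ} {T : ℝ}
    (hp0 : IsProbDensity p0) (hM1 : Integrable fun z : Euc d => ‖z‖ * p0 z) (hT : 0 < T) :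
    ∫⁻ x, ‖pt d p0 T x - gaussianKernel d T x‖ₑ ≤ ENNReal.ofReal ((∫ z, ‖z‖ * p0 z) / √T) := by
  obtain ⟨hp0_meas, hp0_nonneg, hp0_one⟩ := hp0
  calc ∫⁻ x, ‖pt d p0 T x - gaussianKernel d T x‖ₑ
      ≤ ∫⁻ y, ‖p0 y‖ₑ * ∫⁻ x, ‖gaussianKernel d T (x - y) - gaussianKernel d T x‖ₑ :=
        lintegral_enorm_integral_mul_comp_sub_sub_le hp0_meas hp0_one
          continuous_gaussianKernel.measurable (norm_gaussianKernel_le hT)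
    _ ≤ ∫⁻ y, ENNReal.ofReal (‖y‖ * p0 y / √T) := by
        refine lintegral_mono fun y => ?_
        rw [Real.enorm_of_nonneg (hp0_nonneg y), mul_comm ‖y‖, mul_div_assoc,
          ENNReal.ofReal_mul (hp0_nonneg y)]
        gcongr
        exact lintegral_enorm_gaussianKernel_sub_le hT y
    _ = ENNReal.ofReal ((∫ z, ‖z‖ * p0 z) / √T) := by
        rw [← integral_div, ofReal_integral_eq_lintegral_ofReal (hM1.div_const _)
          (Filter.Eventually.of_forall fun y => by positivity [hp0_nonneg y])]

theorem stmt4_general (d : ℕ)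
    (p0 : Euc d → ℝ) (hp0 : IsProbDensity p0)
    (hM1 : Integrable fun z : Euc d => ‖z‖ * p0 z)
    (T : ℝ) (hT : 0 < T) :
    tvDist d (pt d p0 T) (gaussianKernel d T) ≤
      (∫ z, ‖z‖ * p0 z) / (2 * Real.sqrt T) := by
  have hM1_nonneg : 0 ≤ (∫ z, ‖z‖ * p0 z) / √T :=
    div_nonneg (integral_nonneg fun z => mul_nonneg (norm_nonneg z) (hp0.2.1 z))
      (Real.sqrt_nonneg T)
  calc tvDist d (pt d p0 T) (gaussianKernel d T)
      ≤ 1 / 2 * ((∫ z, ‖z‖ * p0 z) / √T) := by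
        unfold tvDist
        gcongr
        exact (integral_abs_le_toReal_lintegral_enorm _).trans (ENNReal.toReal_le_of_le_ofReal
          hM1_nonneg (lintegral_enorm_pt_sub_gaussianKernel_le hp0 hM1 hT))
    _ = (∫ z, ‖z‖ * p0 z) / (2 * √T) := by ring

/-- Initialization error: `TV(p_T, φ_T) ≤ M₁/(2√T)` when `p_0` has finite first moment. -/
theorem stmt4 (d : ℕ) (hd : 1 ≤ d)
    (p0 : Euc d → ℝ) (hp0 : IsProbDensity p0)
    (hM1 : Integrable fun z : Euc d => ‖z‖ * p0 z)
    (T : ℝ) (hT : 0 < T) :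
    tvDist d (pt d p0 T) (gaussianKernel d T) ≤
      (∫ z, ‖z‖ * p0 z) / (2 * Real.sqrt T) :=
  stmt4_general d p0 hp0 hM1 T hT
end
end
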